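/- Let s0 > 0. Then the integrals J(s) := ∫_{-∞}^{∞} (Φ'(z) - Φ'(z+s))² / ( (Φ(z+s) - Φ(z)) · (Φ(-z-s) + Φ(z)) ) dz are uniformly bounded over s ≥ s0; that is, there exists a constant C (depending only on s0) such that J(s) ≤ C for all s ≥ s0. -/

import Mathlib

open MeasureTheory Real Set Filter

/-- The standard normal density `Φ'(z) = (1/√(2π)) e^{-z²/2}`. -/
noncomputable def Φ' (z : ℝ) : ℝ := (Real.sqrt (2 * Real.pi))⁻¹ * Real.exp (-z ^ 2 / 2)

/-- The standard normal cumulative distribution function `Φ`. -/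
noncomputable def Φ (z : ℝ) : ℝ := ∫ u in Set.Iic z, Φ' u

/-!
Write `p = Φ(z+s) - Φ(z)`; the denominator is `p (1 - p)`. Since
`(Φ'(z) - Φ'(z+s))² ≤ Φ'(z)² + Φ'(z+s)²` and the denominator is invariant under `z ↦ -s - z`,
which exchanges the two squares, it suffices to dominate `Φ'(z)² / (p (1 - p))` by a single
integrable function for all `s ≥ s0`. For `z ≥ 0` we have `p ≥ s0 Φ'(z+s0)` and `1 - p ≥ 1/2`;
for `z ≤ -s`, `p ≥ s0 Φ'(z)` and `1 - p ≥ 1/2`; in between, `p ≥ (s0/2) Φ'(s0/2)` and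
`1 - p ≥ Φ(z) ≥ Φ'(z-1)`. The identity `Φ'(z)² = e^{b²} Φ'(z-b) Φ'(z+b)` turns each of the three
quotients into a multiple of a shifted Gaussian density.
-/

open ProbabilityTheory

lemma Φ'_eq_gaussianPDFReal : Φ' = gaussianPDFReal 0 1 := by
  ext z
  simp [Φ', gaussianPDFReal]

lemma Φ'_pos (z : ℝ) : 0 < Φ' z := by
  rw [Φ'_eq_gaussianPDFReal]
  exact gaussianPDFReal_pos _ _ _ one_ne_zero

lemma integrable_Φ' : Integrable Φ' := by
  rw [Φ'_eq_gaussianPDFReal]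
  exact integrable_gaussianPDFReal _ _

lemma integral_Φ' : ∫ z, Φ' z = 1 := by
  rw [Φ'_eq_gaussianPDFReal]
  exact integral_gaussianPDFReal_eq_one _ one_ne_zero

lemma Φ'_neg (z : ℝ) : Φ' (-z) = Φ' z := by
  simp only [Φ', neg_sq]

lemma Φ'_le_of_sq_le {u v : ℝ} (h : u ^ 2 ≤ v ^ 2) : Φ' v ≤ Φ' u := by
  unfold Φ'
  gcongr

lemma Φ'_sq_eq (z b : ℝ) : Φ' z ^ 2 = exp (b ^ 2) * Φ' (z - b) * Φ' (z + b) := by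
  calc Φ' z ^ 2 = (√(2 * π))⁻¹ ^ 2 * exp (b ^ 2 + -(z - b) ^ 2 / 2 + -(z + b) ^ 2 / 2) := by
        rw [Φ', mul_pow, ← exp_nat_mul]; ring_nf
    _ = _ := by rw [exp_add, exp_add, Φ', Φ']; ring

lemma Φ_sub_eq_setIntegral {a b : ℝ} (h : a ≤ b) : Φ b - Φ a = ∫ u in Ioc a b, Φ' u := by
  rw [sub_eq_iff_eq_add', Φ, Φ, ← setIntegral_union (Iic_disjoint_Ioc le_rfl) measurableSet_Ioc
    integrable_Φ'.integrableOn integrable_Φ'.integrableOn, Iic_union_Ioc_eq_Iic h]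

lemma Φ_nonneg (z : ℝ) : 0 ≤ Φ z :=
  setIntegral_nonneg measurableSet_Iic fun u _ => (Φ'_pos u).le

lemma Φ_monotone : Monotone Φ := fun a b h => sub_nonneg.1 <| by
  rw [Φ_sub_eq_setIntegral h]
  exact setIntegral_nonneg measurableSet_Ioc fun u _ => (Φ'_pos u).le

lemma Φ_neg (z : ℝ) : Φ (-z) = 1 - Φ z := by
  have h := intervalIntegral.integral_Iic_add_Ioi (b := z) integrable_Φ'.integrableOn
    integrable_Φ'.integrableOn
  rw [integral_Φ', ← neg_neg z, ← integral_comp_neg_Iic, neg_neg] at h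
  simp only [Φ'_neg] at h
  rw [Φ, Φ]
  linarith

lemma Φ_zero : Φ 0 = 1 / 2 := by
  have := Φ_neg 0
  rw [neg_zero] at this
  linarith

lemma sub_mul_Φ'_le_Φ_sub {a b r : ℝ} (hab : a ≤ b) (ha : a ^ 2 ≤ r ^ 2) (hb : b ^ 2 ≤ r ^ 2) :
    (b - a) * Φ' r ≤ Φ b - Φ a := by
  rw [Φ_sub_eq_setIntegral hab, mul_comm, ← Real.volume_real_Ioc_of_le hab]
  refine setIntegral_ge_of_const_le_real measurableSet_Ioc measure_Ioc_lt_top.ne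
    (fun u hu => Φ'_le_of_sq_le ?_) integrable_Φ'.integrableOn
  have hu' : 0 ≤ (u - a) * (b - u) := mul_nonneg (by linarith [hu.1]) (by linarith [hu.2])
  rcases le_total 0 (a + b) with hab' | hab'
  · nlinarith [mul_le_mul_of_nonneg_left hu.2 hab']
  · nlinarith [mul_le_mul_of_nonpos_left hu.1.le hab']

lemma Φ_sub_pos {a b : ℝ} (h : a < b) : 0 < Φ b - Φ a :=
  (mul_pos (sub_pos.2 h) (Φ'_pos (|a| + |b|))).trans_le <|
    sub_mul_Φ'_le_Φ_sub h.le (by nlinarith [sq_abs a, abs_nonneg a, abs_nonneg b])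
      (by nlinarith [sq_abs b, abs_nonneg a, abs_nonneg b])

lemma Φ_pos (z : ℝ) : 0 < Φ z := by
  linarith [Φ_sub_pos (sub_one_lt z), Φ_nonneg (z - 1)]

lemma Φ'_sub_one_le_Φ {z : ℝ} (hz : z ≤ 0) : Φ' (z - 1) ≤ Φ z := by
  have h := sub_mul_Φ'_le_Φ_sub (sub_one_lt z).le le_rfl (by nlinarith)
  rw [sub_sub_cancel, one_mul] at h
  linarith [Φ_nonneg (z - 1)]

noncomputable def denom (s z : ℝ) : ℝ := (Φ (z + s) - Φ z) * (Φ (-z - s) + Φ z)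

lemma denom_pos {s : ℝ} (hs : 0 < s) (z : ℝ) : 0 < denom s z :=
  mul_pos (Φ_sub_pos (by linarith)) (by linarith [Φ_nonneg (-z - s), Φ_pos z])

lemma denom_neg_sub (s z : ℝ) : denom s (-s - z) = denom s z := by
  rw [denom, denom, show -(-s - z) - s = z by ring, show -s - z + s = -z by ring,
    show -s - z = -(z + s) by ring, show -z - s = -(z + s) by ring, Φ_neg, Φ_neg]
  ring

lemma mul_Φ'_le_denom_of_nonneg {s0 s z : ℝ} (hs0 : 0 < s0) (hs : s0 ≤ s) (hz : 0 ≤ z) :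
    s0 * Φ' (z + s0) / 2 ≤ denom s z := by
  have hp : s0 * Φ' (z + s0) ≤ Φ (z + s) - Φ z := by
    have h := sub_mul_Φ'_le_Φ_sub (by linarith : z ≤ z + s0) (by nlinarith) le_rfl
    rw [add_sub_cancel_left] at h
    linarith [Φ_monotone (by linarith : z + s0 ≤ z + s)]
  have hq : 1 / 2 ≤ Φ (-z - s) + Φ z := by
    linarith [Φ_zero, Φ_monotone hz, Φ_nonneg (-z - s)]
  calc s0 * Φ' (z + s0) / 2 = s0 * Φ' (z + s0) * (1 / 2) := by ring
    _ ≤ denom s z := mul_le_mul hp hq (by norm_num) (Φ_sub_pos (by linarith)).le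

lemma mul_Φ'_le_denom_of_le_neg {s0 s z : ℝ} (hs0 : 0 < s0) (hs : s0 ≤ s) (hz : z ≤ -s) :
    s0 * Φ' z / 2 ≤ denom s z := by
  have hp : s0 * Φ' z ≤ Φ (z + s) - Φ z := by
    have h := sub_mul_Φ'_le_Φ_sub (by linarith : z ≤ z + s0) le_rfl (by nlinarith)
    rw [add_sub_cancel_left] at h
    linarith [Φ_monotone (by linarith : z + s0 ≤ z + s)]
  have hq : 1 / 2 ≤ Φ (-z - s) + Φ z := by
    linarith [Φ_zero, Φ_monotone (by linarith : 0 ≤ -z - s), Φ_nonneg z]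
  calc s0 * Φ' z / 2 = s0 * Φ' z * (1 / 2) := by ring
    _ ≤ denom s z := mul_le_mul hp hq (by norm_num) (Φ_sub_pos (by linarith)).le

lemma half_mul_Φ'_half_le_Φ_add_sub {s0 s z : ℝ} (hs0 : 0 < s0) (hs : s0 ≤ s) (hz : -s ≤ z)
    (hz' : z ≤ 0) : s0 / 2 * Φ' (s0 / 2) ≤ Φ (z + s) - Φ z := by
  rcases le_total z (-(s0 / 2)) with hz'' | hz''
  · have h := sub_mul_Φ'_le_Φ_sub (r := s0 / 2) (by linarith : -(s0 / 2) ≤ 0) (neg_sq _).le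
      (by norm_num [sq_nonneg])
    rw [zero_sub, neg_neg] at h
    linarith [Φ_monotone (by linarith : 0 ≤ z + s), Φ_monotone hz'']
  · have h := sub_mul_Φ'_le_Φ_sub (by linarith : 0 ≤ s0 / 2) (by norm_num [sq_nonneg]) le_rfl
    rw [sub_zero] at h
    linarith [Φ_monotone (by linarith : s0 / 2 ≤ z + s), Φ_monotone hz']

lemma mul_Φ'_le_denom_of_neg_le_of_nonpos {s0 s z : ℝ} (hs0 : 0 < s0) (hs : s0 ≤ s) (hz : -s ≤ z)
    (hz' : z ≤ 0) : s0 / 2 * Φ' (s0 / 2) * Φ' (z - 1) ≤ denom s z :=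
  mul_le_mul (half_mul_Φ'_half_le_Φ_add_sub hs0 hs hz hz')
    (by linarith [Φ'_sub_one_le_Φ hz', Φ_nonneg (-z - s)]) (Φ'_pos _).le
    (Φ_sub_pos (by linarith)).le

noncomputable def majorant (s0 z : ℝ) : ℝ :=
  2 * exp (s0 ^ 2) / s0 * Φ' (z - s0) + 2 / s0 * Φ' z + exp 1 / (s0 / 2 * Φ' (s0 / 2)) * Φ' (z + 1)

lemma integrable_majorant (s0 : ℝ) : Integrable (majorant s0) :=
  (((integrable_Φ'.comp_sub_right s0).const_mul _).add (integrable_Φ'.const_mul _)).add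
    ((integrable_Φ'.comp_add_right 1).const_mul _)

lemma Φ'_sq_div_denom_le_majorant {s0 s : ℝ} (hs0 : 0 < s0) (hs : s0 ≤ s) (z : ℝ) :
    Φ' z ^ 2 / denom s z ≤ majorant s0 z := by
  have h₁ : 0 ≤ 2 * exp (s0 ^ 2) / s0 * Φ' (z - s0) := by have := Φ'_pos (z - s0); positivity
  have h₂ : 0 ≤ 2 / s0 * Φ' z := by have := Φ'_pos z; positivity
  have h₃ : 0 ≤ exp 1 / (s0 / 2 * Φ' (s0 / 2)) * Φ' (z + 1) := by
    have := Φ'_pos (s0 / 2); have := Φ'_pos (z + 1); positivity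
  have hc := Φ'_pos (s0 / 2)
  rcases le_total 0 z with hz | hz
  · have := Φ'_pos (z + s0)
    calc Φ' z ^ 2 / denom s z ≤ Φ' z ^ 2 / (s0 * Φ' (z + s0) / 2) :=
          div_le_div_of_nonneg_left (sq_nonneg _) (by positivity)
            (mul_Φ'_le_denom_of_nonneg hs0 hs hz)
      _ = 2 * exp (s0 ^ 2) / s0 * Φ' (z - s0) := by rw [Φ'_sq_eq z s0]; field_simp
      _ ≤ majorant s0 z := by unfold majorant; linarith
  rcases le_total z (-s) with hz' | hz'
  · have := Φ'_pos z
    calc Φ' z ^ 2 / denom s z ≤ Φ' z ^ 2 / (s0 * Φ' z / 2) :=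
          div_le_div_of_nonneg_left (sq_nonneg _) (by positivity)
            (mul_Φ'_le_denom_of_le_neg hs0 hs hz')
      _ = 2 / s0 * Φ' z := by field_simp
      _ ≤ majorant s0 z := by unfold majorant; linarith
  · have := Φ'_pos (z - 1)
    calc Φ' z ^ 2 / denom s z ≤ Φ' z ^ 2 / (s0 / 2 * Φ' (s0 / 2) * Φ' (z - 1)) :=
          div_le_div_of_nonneg_left (sq_nonneg _) (by positivity)
            (mul_Φ'_le_denom_of_neg_le_of_nonpos hs0 hs hz' hz)
      _ = exp 1 / (s0 / 2 * Φ' (s0 / 2)) * Φ' (z + 1) := by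
          rw [Φ'_sq_eq z 1, one_pow]; field_simp
      _ ≤ majorant s0 z := by unfold majorant; linarith

noncomputable def integrandJ (s z : ℝ) : ℝ := (Φ' z - Φ' (z + s)) ^ 2 / denom s z

lemma integrandJ_nonneg {s : ℝ} (hs : 0 < s) (z : ℝ) : 0 ≤ integrandJ s z :=
  div_nonneg (sq_nonneg _) (denom_pos hs z).le

lemma measurable_integrandJ (s : ℝ) : Measurable (integrandJ s) := by
  have hΦ' : Continuous Φ' := by unfold Φ'; fun_prop
  have hΦ : Measurable Φ := Φ_monotone.measurable
  unfold integrandJ denom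
  exact ((hΦ'.sub (hΦ'.comp (continuous_add_const s))).pow 2).measurable.div
    (((hΦ.comp (measurable_add_const s)).sub hΦ).mul
      ((hΦ.comp (measurable_neg.sub_const s)).add hΦ))

lemma integrandJ_le {s0 s : ℝ} (hs0 : 0 < s0) (hs : s0 ≤ s) (z : ℝ) :
    integrandJ s z ≤ majorant s0 z + majorant s0 (-s - z) := by
  have hsq : (Φ' z - Φ' (z + s)) ^ 2 ≤ Φ' z ^ 2 + Φ' (-s - z) ^ 2 := by
    rw [show -s - z = -(z + s) by ring, Φ'_neg]
    nlinarith [Φ'_pos z, Φ'_pos (z + s)]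
  have h := Φ'_sq_div_denom_le_majorant hs0 hs (-s - z)
  rw [denom_neg_sub] at h
  calc integrandJ s z ≤ (Φ' z ^ 2 + Φ' (-s - z) ^ 2) / denom s z :=
        div_le_div_of_nonneg_right hsq (denom_pos (hs0.trans_le hs) z).le
    _ = Φ' z ^ 2 / denom s z + Φ' (-s - z) ^ 2 / denom s z := add_div _ _ _
    _ ≤ majorant s0 z + majorant s0 (-s - z) :=
        add_le_add (Φ'_sq_div_denom_le_majorant hs0 hs z) h

/-- the integrals `J(s)` over all of `ℝ` are uniformly bounded for `s ≥ s0 > 0`. -/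
theorem uniform_bound_J (s0 : ℝ) (hs0 : 0 < s0) :
    ∃ C : ℝ, ∀ s : ℝ, s0 ≤ s →
      Integrable (fun z : ℝ =>
        (Φ' z - Φ' (z + s)) ^ 2 / ((Φ (z + s) - Φ z) * (Φ (-z - s) + Φ z))) volume ∧
      (∫ z : ℝ, (Φ' z - Φ' (z + s)) ^ 2 / ((Φ (z + s) - Φ z) * (Φ (-z - s) + Φ z))) ≤ C := by
  refine ⟨2 * ∫ z, majorant s0 z, fun s hs => ?_⟩
  change Integrable (integrandJ s) ∧ ∫ z, integrandJ s z ≤ _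
  have hG : Integrable fun z => majorant s0 z + majorant s0 (-s - z) :=
    (integrable_majorant s0).add ((integrable_majorant s0).comp_sub_left (-s))
  have hJ : Integrable (integrandJ s) :=
    hG.mono' (measurable_integrandJ s).aestronglyMeasurable <| .of_forall fun z => by
      rw [Real.norm_of_nonneg (integrandJ_nonneg (hs0.trans_le hs) z)]
      exact integrandJ_le hs0 hs z
  refine ⟨hJ, ?_⟩
  calc ∫ z, integrandJ s z ≤ ∫ z, (majorant s0 z + majorant s0 (-s - z)) :=
        integral_mono hJ hG (integrandJ_le hs0 hs)
    _ = 2 * ∫ z, majorant s0 z := by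
        rw [integral_add (integrable_majorant s0) ((integrable_majorant s0).comp_sub_left (-s)),
          integral_sub_left_eq_self (majorant s0) volume (-s)]
        ring
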